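/- arXiv:2407.18393 — 3 statements merged into one kernel-verified Lean document; each statement's English description precedes it below -/
import Mathlib

section
/- Expansion Lemma: Let F : F₂^{C₀} → F₂^{V₀} over F₂, assume the all-ones vector 𝟙 satisfies F·𝟙ᵀ = 0 (every row of F has even weight), and let β be the boundary Cheeger constant of F^⊤. Fix an odd L with ⌈L/2⌉ ≥ 1/β. Given s ∈ F₂^{V₀} and vectors v₁, v₃, …, v_L ∈ F₂^{V₀}, define W = |s + v₁| + Σ_{odd i, 3≤i≤L} |v_i + v_{i−2}| + Σ_{odd j, 1≤j≤L} |v_j F^⊤|, where |·| denotes Hamming weight. Then W ≥ min(|s|, |V₀| − |s|). -/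
open Finset

/-- Hamming weight of a vector over `F₂`. -/
def hammingWt {k : ℕ} (x : Fin k → ZMod 2) : ℕ :=
  (Finset.univ.filter (fun i => x i ≠ 0)).card

lemma hammingWt_le {k : ℕ} (x : Fin k → ZMod 2) : hammingWt x ≤ k := by
  simpa [hammingWt] using (Finset.card_filter_le univ (fun i => x i ≠ 0))

lemma hammingWt_triangle {k : ℕ} (x y : Fin k → ZMod 2) :
    hammingWt (x + y) ≤ hammingWt x + hammingWt y := by
  classical
  unfold hammingWt
  refine le_trans (Finset.card_le_card ?_) (Finset.card_union_le _ _)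
  intro i hi
  simp only [mem_filter, mem_union, mem_univ, true_and, Pi.add_apply] at hi ⊢
  by_contra h
  push_neg at h
  simp [h.1, h.2] at hi

lemma zmod2_self_add {k : ℕ} (x : Fin k → ZMod 2) : x + x = 0 := by
  funext i
  simp [Pi.add_apply]
  have : ∀ a : ZMod 2, a + a = 0 := by decide
  exact this (x i)

lemma hammingWt_tri' {k : ℕ} (x y : Fin k → ZMod 2) :
    hammingWt x ≤ hammingWt (x + y) + hammingWt y := by
  have h : x = (x + y) + y := by
    rw [add_assoc, zmod2_self_add, add_zero]
  calc hammingWt x = hammingWt ((x + y) + y) := by rw [← h]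
    _ ≤ _ := hammingWt_triangle _ _

lemma hammingWt_zero {k : ℕ} : hammingWt (0 : Fin k → ZMod 2) = 0 := by
  simp [hammingWt]

lemma hammingWt_comp {k : ℕ} (x : Fin k → ZMod 2) :
    hammingWt (x + (fun _ => 1 : Fin k → ZMod 2)) = k - hammingWt x := by
  classical
  have key : ∀ a : ZMod 2, a + 1 ≠ 0 ↔ a = 0 := by decide
  unfold hammingWt
  have h1 : (univ.filter (fun i => (x + (fun _ => 1 : Fin k → ZMod 2)) i ≠ 0))
      = (univ.filter (fun i => x i ≠ 0))ᶜ := by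
    ext i
    simp [key, Pi.add_apply]
  rw [h1, Finset.card_compl]
  simp

lemma card_filter_odd (N : ℕ) :
    ((Finset.range (2 * N)).filter (fun j => Odd j)).card = N := by
  induction N with
  | zero => simp
  | succ N ih =>
    have h2 : 2 * (N + 1) = (2 * N + 1) + 1 := by ring
    rw [h2, Finset.range_add_one, Finset.range_add_one, filter_insert, filter_insert]
    rw [if_pos (by simp [Nat.odd_iff, Nat.add_mod, Nat.mul_mod]),
        if_neg (by simp [Nat.odd_iff, Nat.mul_mod])]
    rw [Finset.card_insert_of_notMem (by simp), ih]

lemma beta_min {mC n : ℕ} (F : Matrix (Fin mC) (Fin n) (ZMod 2))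
    (hrow : F.mulVec (fun _ => 1) = 0)
    (β : ℝ)
    (hβ : β = sInf {r : ℝ | ∃ v : Fin n → ZMod 2, v ≠ 0 ∧ 2 * hammingWt v ≤ n ∧
      r = (hammingWt (F.mulVec v) : ℝ) / hammingWt v})
    (v : Fin n → ZMod 2) :
    β * (min (hammingWt v) (n - hammingWt v) : ℕ) ≤ (hammingWt (F.mulVec v) : ℝ) := by
  have hbdd : BddBelow {r : ℝ | ∃ v : Fin n → ZMod 2, v ≠ 0 ∧ 2 * hammingWt v ≤ n ∧
      r = (hammingWt (F.mulVec v) : ℝ) / hammingWt v} := by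
    refine ⟨0, ?_⟩
    rintro r ⟨w, -, -, rfl⟩
    positivity
  have hβ0 : 0 ≤ β := by
    rw [hβ]
    apply Real.sInf_nonneg
    rintro r ⟨w, -, -, rfl⟩
    positivity
  -- base case lemma
  have base : ∀ w : Fin n → ZMod 2, w ≠ 0 → 2 * hammingWt w ≤ n →
      β * (hammingWt w : ℝ) ≤ (hammingWt (F.mulVec w) : ℝ) := by
    intro w hw h2
    have hmem : (hammingWt (F.mulVec w) : ℝ) / hammingWt w ∈ {r : ℝ | ∃ v : Fin n → ZMod 2,
        v ≠ 0 ∧ 2 * hammingWt v ≤ n ∧ r = (hammingWt (F.mulVec v) : ℝ) / hammingWt v} :=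
      ⟨w, hw, h2, rfl⟩
    have hle : β ≤ (hammingWt (F.mulVec w) : ℝ) / hammingWt w := by
      rw [hβ]; exact csInf_le hbdd hmem
    have hwpos : (0 : ℝ) < (hammingWt w : ℝ) := by
      have hne : hammingWt w ≠ 0 := by
        intro h0
        apply hw
        funext i
        by_contra hx
        have hx' : w i ≠ 0 := by simpa using hx
        have hmem : i ∈ univ.filter (fun i => w i ≠ 0) := by
          simp [hx']
        have hpos := Finset.card_pos.mpr ⟨i, hmem⟩
        unfold hammingWt at h0
        omega
      exact_mod_cast Nat.pos_of_ne_zero hne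
    calc β * (hammingWt w : ℝ)
        ≤ ((hammingWt (F.mulVec w) : ℝ) / hammingWt w) * hammingWt w :=
          mul_le_mul_of_nonneg_right hle hwpos.le
      _ = (hammingWt (F.mulVec w) : ℝ) := by field_simp
  by_cases h2 : 2 * hammingWt v ≤ n
  · by_cases hv : v = 0
    · subst hv
      simp [hammingWt_zero]
    · have hmin : min (hammingWt v) (n - hammingWt v) = hammingWt v := by omega
      rw [hmin]
      exact base v hv h2
  · push_neg at h2
    have hvle : hammingWt v ≤ n := hammingWt_le v
    set w : Fin n → ZMod 2 := v + (fun _ => 1) with hwdef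
    have hww : hammingWt w = n - hammingWt v := hammingWt_comp v
    have hFw : F.mulVec w = F.mulVec v := by
      rw [hwdef, Matrix.mulVec_add, hrow, add_zero]
    have hmin : min (hammingWt v) (n - hammingWt v) = n - hammingWt v := by omega
    rw [hmin, ← hww, ← hFw]
    by_cases hw0 : w = 0
    · rw [hw0, hammingWt_zero]
      simp
    · exact base w hw0 (by omega)

/-- Expansion Lemma: with `F : C₀ × V₀ → F₂` having all rows of even weight
(`F·𝟙 = 0`), `β` the boundary Cheeger constant of `F^⊤`, and `L` odd with
`⌈L/2⌉ ≥ 1/β` (stated as `1 ≤ β·⌈L/2⌉`), for any `s` and odd-indexed vectors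
`v₁, v₃, …, v_L` the quantity
`W = |s + v₁| + Σ_{odd i, 3≤i≤L} |vᵢ + v_{i−2}| + Σ_{odd j ≤ L} |vⱼF^⊤|`
satisfies `W ≥ min(|s|, |V₀| − |s|)`. -/
theorem stmt_5 (mC n : ℕ) (F : Matrix (Fin mC) (Fin n) (ZMod 2))
    (hrow : F.mulVec (fun _ => 1) = 0)
    (β : ℝ)
    (hβ : β = sInf {r : ℝ | ∃ v : Fin n → ZMod 2, v ≠ 0 ∧ 2 * hammingWt v ≤ n ∧
      r = (hammingWt (F.mulVec v) : ℝ) / hammingWt v})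
    (L : ℕ) (hL : Odd L) (hLβ : (1 : ℝ) ≤ β * (((L + 1) / 2 : ℕ) : ℝ))
    (s : Fin n → ZMod 2) (vs : ℕ → (Fin n → ZMod 2)) :
    min (hammingWt s) (n - hammingWt s) ≤
      hammingWt (s + vs 1)
      + ∑ i ∈ (Finset.range (L + 1)).filter (fun i => Odd i ∧ 3 ≤ i),
          hammingWt (vs i + vs (i - 2))
      + ∑ j ∈ (Finset.range (L + 1)).filter (fun j => Odd j),
          hammingWt (F.mulVec (vs j)) := by
  classical
  obtain ⟨K, hK⟩ := hL
  set k := (L + 1) / 2 with hk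
  have hkK : k = K + 1 := by omega
  have hL1 : L + 1 = 2 * k := by omega
  set m := min (hammingWt s) (n - hammingWt s) with hm
  set A := ∑ i ∈ (Finset.range (L + 1)).filter (fun i => Odd i ∧ 3 ≤ i),
      hammingWt (vs i + vs (i - 2)) with hA
  set B := ∑ j ∈ (Finset.range (L + 1)).filter (fun j => Odd j),
      hammingWt (F.mulVec (vs j)) with hB
  set w1 := hammingWt (s + vs 1) with hw1
  set T := w1 + A with hT
  -- Step 1 & 2: partial chain bound
  have chain : ∀ t : ℕ, 2 * t + 1 ≤ L → hammingWt (vs (2 * t + 1) + s) ≤ T := by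
    have partial_sum_le : ∀ N : ℕ, N ≤ L + 1 →
        (∑ i ∈ (Finset.range N).filter (fun i => Odd i ∧ 3 ≤ i),
          hammingWt (vs i + vs (i - 2))) ≤ A := by
      intro N hN
      apply Finset.sum_le_sum_of_subset
      apply Finset.filter_subset_filter
      exact Finset.range_subset_range.mpr hN
    have step1 : ∀ t : ℕ, 2 * t + 1 ≤ L →
        hammingWt (vs (2 * t + 1) + s) ≤ w1 +
          ∑ i ∈ (Finset.range (2 * t + 2)).filter (fun i => Odd i ∧ 3 ≤ i),
            hammingWt (vs i + vs (i - 2)) := by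
      intro t
      induction t with
      | zero =>
        intro _
        have h0 : 2 * 0 + 1 = 1 := by norm_num
        rw [h0, add_comm (vs 1) s, ← hw1]
        exact Nat.le_add_right _ _
      | succ t ih =>
        intro hle
        have ihh := ih (by omega)
        have h23 : 2 * (t + 1) + 1 = 2 * t + 3 := by ring
        have h24 : 2 * (t + 1) + 2 = 2 * t + 4 := by ring
        rw [h23, h24]
        have htri : hammingWt (vs (2 * t + 3) + s) ≤
            hammingWt (vs (2 * t + 3) + vs (2 * t + 1)) +
            hammingWt (vs (2 * t + 1) + s) := by
          have heq : vs (2 * t + 3) + s =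
              (vs (2 * t + 3) + vs (2 * t + 1)) + (vs (2 * t + 1) + s) := by
            rw [add_assoc]
            congr 1
            rw [← add_assoc, zmod2_self_add, zero_add]
          rw [heq]
          exact hammingWt_triangle _ _
        have hsum : ∑ i ∈ (Finset.range (2 * t + 4)).filter (fun i => Odd i ∧ 3 ≤ i),
              hammingWt (vs i + vs (i - 2))
            = (∑ i ∈ (Finset.range (2 * t + 2)).filter (fun i => Odd i ∧ 3 ≤ i),
              hammingWt (vs i + vs (i - 2))) + hammingWt (vs (2 * t + 3) + vs (2 * t + 1)) := by
          rw [Finset.sum_filter, Finset.sum_filter]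
          have h4 : 2 * t + 4 = (2 * t + 3) + 1 := by ring
          rw [h4, Finset.sum_range_succ]
          have h5 : 2 * t + 3 = (2 * t + 2) + 1 := by ring
          rw [h5, Finset.sum_range_succ]
          have hc1 : ¬(Odd (2 * t + 2) ∧ 3 ≤ 2 * t + 2) := by
            rintro ⟨⟨u, hu⟩, -⟩; omega
          have hc2 : Odd (2 * t + 2 + 1) ∧ 3 ≤ 2 * t + 2 + 1 := ⟨⟨t + 1, by ring⟩, by omega⟩
          rw [if_neg hc1, if_pos hc2]
          have e1 : 2 * t + 2 + 1 = 2 * t + 3 := by ring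
          rw [e1]
          have e2 : 2 * t + 3 - 2 = 2 * t + 1 := by omega
          rw [e2]
          omega
        rw [hsum]
        omega
    intro t ht
    have := step1 t ht
    have := partial_sum_le (2 * t + 2) (by omega)
    omega
  -- Step 3: min bound, for arbitrary odd j
  have step3 : ∀ j ∈ (Finset.range (L + 1)).filter (fun j => Odd j),
      m ≤ min (hammingWt (vs j)) (n - hammingWt (vs j)) + T := by
    intro j hj
    simp only [mem_filter, mem_range] at hj
    obtain ⟨hjL, t, htj⟩ := hj
    have hj1 : j = 2 * t + 1 := by omega
    subst hj1
    have hch := chain t (by omega)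
    set v := vs (2 * t + 1) with hv
    have h1 : hammingWt s ≤ hammingWt v + T := by
      have := hammingWt_tri' s (v + s)
      have heq : s + (v + s) = v := by
        rw [add_comm v s, ← add_assoc, zmod2_self_add, zero_add]
      rw [heq] at this
      omega
    have h2 : hammingWt v ≤ hammingWt s + T := by
      have := hammingWt_tri' v (v + s)
      have heq : v + (v + s) = s := by
        rw [← add_assoc, zmod2_self_add, zero_add]
      rw [heq] at this
      omega
    have hsle : hammingWt s ≤ n := hammingWt_le s
    omega
  -- main case split
  by_cases hmT : m ≤ T
  · omega
  · push_neg at hmT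
    -- work in ℝ
    have hβ0 : 0 ≤ β := by
      rw [hβ]
      apply Real.sInf_nonneg
      rintro r ⟨w, -, -, rfl⟩
      positivity
    have hcard : ((Finset.range (L + 1)).filter (fun j => Odd j)).card = k := by
      rw [hL1]; exact card_filter_odd k
    have keyj : ∀ j ∈ (Finset.range (L + 1)).filter (fun j => Odd j),
        β * ((m : ℝ) - T) ≤ (hammingWt (F.mulVec (vs j)) : ℝ) := by
      intro j hj
      have h3 := step3 j hj
      have hminre : (m : ℝ) - T ≤ (min (hammingWt (vs j)) (n - hammingWt (vs j)) : ℕ) := by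
        have : (m : ℝ) ≤ (min (hammingWt (vs j)) (n - hammingWt (vs j)) : ℕ) + T := by
          exact_mod_cast h3
        linarith
      calc β * ((m : ℝ) - T)
          ≤ β * (min (hammingWt (vs j)) (n - hammingWt (vs j)) : ℕ) :=
            mul_le_mul_of_nonneg_left hminre hβ0
        _ ≤ _ := beta_min F hrow β hβ (vs j)
    have hsum : (k : ℝ) * (β * ((m : ℝ) - T)) ≤ (B : ℝ) := by
      have := Finset.sum_le_sum keyj
      rw [Finset.sum_const, hcard] at this
      calc (k : ℝ) * (β * ((m : ℝ) - T)) = (k : ℕ) • (β * ((m : ℝ) - T)) := by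
            rw [nsmul_eq_mul]
        _ ≤ ∑ j ∈ (Finset.range (L + 1)).filter (fun j => Odd j),
              (hammingWt (F.mulVec (vs j)) : ℝ) := this
        _ = (B : ℝ) := by rw [hB]; push_cast; ring
    have hmT' : (0 : ℝ) ≤ (m : ℝ) - T := by
      have : (T : ℝ) < m := by exact_mod_cast hmT
      linarith
    have hfin : (m : ℝ) ≤ (T : ℝ) + B := by
      have h1 : (m : ℝ) - T ≤ β * k * ((m : ℝ) - T) := by
        nlinarith [hLβ, hmT']
      have h2 : β * k * ((m : ℝ) - T) ≤ (B : ℝ) := by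
        calc β * k * ((m : ℝ) - T) = (k : ℝ) * (β * ((m : ℝ) - T)) := by ring
          _ ≤ _ := hsum
      linarith
    have hTc : (T : ℝ) = (w1 : ℝ) + (A : ℝ) := by rw [hT]; push_cast; ring
    have : (m : ℝ) ≤ ((w1 + A + B : ℕ) : ℝ) := by
      push_cast
      linarith [hfin, hTc]
    exact_mod_cast this
end

section
/- Let H be an m×n matrix over F₂ with rank r. Then the hypergraph product code Q = HGP(H, Hᵀ), defined on n² + m² qubits with check matrices H_Z = [H⊗I_n , I_m⊗Hᵀ] and H_X = [I_n⊗H , Hᵀ⊗I_m], satisfies: (a) H_X · H_Zᵀ = 0, and (b) the number of logical qubits is (n²+m²) − rank(H_X) − rank(H_Z) = (n−r)² + (m−r)². -/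
/-!
Identify `m × n`-indexed vectors with `n × m` matrices through `Matrix.vec`. Then `Hᵀ ⊗ 1` acts as
`X ↦ X * H` and `1 ⊗ H` as `X ↦ H * X`, so the kernel of `H_Zᵀ` is the space of matrices `X` with
`H * X = 0` and `X * H = 0`. Such an `X` maps into `ker H` and kills the column space of `H`, so
the kernel is `Hom(coker H, ker H)` and has dimension `(n - r) * (m - r)`. By rank–nullity
`rank H_Z = m n - (n - r) (m - r)`, and `H_X` is the same construction applied to `Hᵀ`, with its
two column blocks swapped. The CSS condition holds because both blocks of `H_X * H_Zᵀ` equal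
`Hᵀ ⊗ H`, and `2 = 0` in `F₂`.
-/

open Matrix Kronecker Module

namespace Matrix

variable {R K : Type*} [Field K] {m n p q : Type*}

theorem mul_eq_self_of_mul_eq_zero [Semiring R] [Fintype n] {A : Matrix m n R}
    {P : Matrix n n R} (hP : ∀ v, A *ᵥ v = 0 → P *ᵥ v = v) {X : Matrix n p R}
    (hX : A * X = 0) : P * X = X := by
  ext i j
  have hcol : A *ᵥ (fun k => X k j) = 0 := funext fun i' => congrFun (congrFun hX i') j
  exact congrFun (hP _ hcol) i

theorem rank_add_finrank_ker [Fintype n] (G : Matrix m n K) :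
    G.rank + finrank K (LinearMap.ker G.mulVecLin) = Fintype.card n := by
  rw [rank, LinearMap.finrank_range_add_finrank_ker, finrank_fintype_fun_eq_card]

theorem rank_fromCols_comm [CommSemiring R] [Fintype p] [Fintype q] (A : Matrix m p R)
    (B : Matrix m q R) : (fromCols A B).rank = (fromCols B A).rank := by
  rw [← rank_submatrix (fromCols A B) (Equiv.refl m) (Equiv.sumComm q p)]
  congr 1
  ext i (j | j) <;> rfl

theorem exists_basis_matrix_ker [Fintype n] [DecidableEq n] (G : Matrix m n K) :
    ∃ (a : ℕ) (Ψ : Matrix n (Fin a) K) (Φ : Matrix (Fin a) n K),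
      a = finrank K (LinearMap.ker G.mulVecLin) ∧
      Φ * Ψ = 1 ∧ G * Ψ = 0 ∧ ∀ v, G *ᵥ v = 0 → (Ψ * Φ) *ᵥ v = v := by
  set N := LinearMap.ker G.mulVecLin
  let e := (finBasis K N).equivFun
  let f : (Fin (finrank K N) → K) →ₗ[K] n → K := N.subtype ∘ₗ e.symm.toLinearMap
  have hf : LinearMap.ker f = ⊥ := by simp [f, LinearMap.ker_comp]
  obtain ⟨g, hgf⟩ := f.exists_leftInverse_of_injective hf
  refine ⟨_, LinearMap.toMatrix' f, LinearMap.toMatrix' g, rfl, ?_, ?_, fun v hv => ?_⟩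
  · rw [← LinearMap.toMatrix'_comp, hgf, LinearMap.toMatrix'_id]
  · have hGf : toLin' G ∘ₗ f = 0 := LinearMap.ext fun y => (e.symm y).2
    simpa [LinearMap.toMatrix'_comp] using congrArg LinearMap.toMatrix' hGf
  · have hv' : f (e ⟨v, hv⟩) = v := by simp [f]
    rw [← mulVec_mulVec, LinearMap.toMatrix'_mulVec, LinearMap.toMatrix'_mulVec, ← hv',
      ← LinearMap.comp_apply g f, hgf, LinearMap.id_apply]

def twoSidedAnnihilator [Fintype m] [Fintype n] (G : Matrix m n K) :
    Submodule K (Matrix n m K) where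
  carrier := {X | G * X = 0 ∧ X * G = 0}
  add_mem' := by
    rintro X Y ⟨hGX, hXG⟩ ⟨hGY, hYG⟩
    simp [Matrix.mul_add, Matrix.add_mul, *]
  zero_mem' := by simp
  smul_mem' := by
    rintro c X ⟨hGX, hXG⟩
    simp [*]

theorem mem_twoSidedAnnihilator [Fintype m] [Fintype n] {G : Matrix m n K} {X : Matrix n m K} :
    X ∈ twoSidedAnnihilator G ↔ G * X = 0 ∧ X * G = 0 := Iff.rfl

section

variable [Fintype m] [Fintype n] [DecidableEq m] [DecidableEq n]

theorem finrank_twoSidedAnnihilator (G : Matrix m n K) :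
    finrank K (twoSidedAnnihilator G) =
      finrank K (LinearMap.ker G.mulVecLin) * finrank K (LinearMap.ker Gᵀ.mulVecLin) := by
  obtain ⟨a, Ψ, Φ, ha, hΦΨ, hGΨ, hΨΦ⟩ := exists_basis_matrix_ker G
  obtain ⟨b, Ψ', Φ', hb, hΦΨ', hGΨ', hΨΦ'⟩ := exists_basis_matrix_ker Gᵀ
  have hΨ'G : Ψ'ᵀ * G = 0 := by
    rw [← transpose_transpose G, ← transpose_mul, hGΨ', transpose_zero]
  let e : twoSidedAnnihilator G ≃ₗ[K] Matrix (Fin a) (Fin b) K :=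
    { toFun := fun X => Φ * X.1 * Φ'ᵀ
      map_add' := fun X Y => by simp [Matrix.mul_add, Matrix.add_mul]
      map_smul' := fun c X => by simp
      invFun := fun Y => ⟨Ψ * Y * Ψ'ᵀ, by
        rw [mem_twoSidedAnnihilator, ← Matrix.mul_assoc, ← Matrix.mul_assoc, hGΨ,
          Matrix.mul_assoc _ Ψ'ᵀ, hΨ'G]
        simp⟩
      left_inv := fun ⟨X, hGX, hXG⟩ => by
        have h1 : Ψ * Φ * X = X := mul_eq_self_of_mul_eq_zero hΨΦ hGX
        have h2 : X * (Φ'ᵀ * Ψ'ᵀ) = X := by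
          rw [← transpose_mul, ← transpose_transpose X, ← transpose_mul, transpose_transpose]
          exact congrArg transpose
            (mul_eq_self_of_mul_eq_zero hΨΦ' (by rw [← transpose_mul, hXG, transpose_zero]))
        ext1
        calc Ψ * (Φ * X * Φ'ᵀ) * Ψ'ᵀ = Ψ * Φ * X * (Φ'ᵀ * Ψ'ᵀ) := by
              simp only [Matrix.mul_assoc]
          _ = X := by rw [h1, h2]
      right_inv := fun Y => by
        calc Φ * (Ψ * Y * Ψ'ᵀ) * Φ'ᵀ = Φ * Ψ * Y * (Φ' * Ψ')ᵀ := by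
              simp only [transpose_mul, Matrix.mul_assoc]
          _ = Y := by rw [hΦΨ, hΦΨ', transpose_one, Matrix.one_mul, Matrix.mul_one] }
  rw [e.finrank_eq, finrank_matrix, Fintype.card_fin, Fintype.card_fin, finrank_self, mul_one,
    ha, hb]

end

def vecLinearEquiv [Semiring R] : Matrix m n R ≃ₗ[R] (n × m → R) :=
  (transposeLinearEquiv m n R R).trans (LinearEquiv.curry R R n m).symm

theorem vecLinearEquiv_apply [Semiring R] (X : Matrix m n R) : vecLinearEquiv X = vec X := rfl

section

variable [Fintype m] [Fintype n] [DecidableEq m] [DecidableEq n]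

theorem ker_transpose_fromCols_kronecker (G : Matrix m n K) :
    LinearMap.ker (fromCols (G ⊗ₖ (1 : Matrix n n K)) ((1 : Matrix m m K) ⊗ₖ Gᵀ))ᵀ.mulVecLin =
      (twoSidedAnnihilator G).map (vecLinearEquiv : Matrix n m K ≃ₗ[K] _).toLinearMap := by
  ext x
  obtain ⟨X, rfl⟩ := (vecLinearEquiv : Matrix n m K ≃ₗ[K] _).surjective x
  rw [Submodule.mem_map_equiv, LinearEquiv.symm_apply_apply, LinearMap.mem_ker, mulVecLin_apply,
    vecLinearEquiv_apply, transpose_fromCols, fromRows_mulVec, ← kroneckerMap_transpose,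
    ← kroneckerMap_transpose, kronecker_mulVec_vec, kronecker_mulVec_vec, ← Sum.elim_zero_zero,
    Sum.elim_eq_iff, vec_eq_zero_iff, vec_eq_zero_iff, and_comm]
  simp [mem_twoSidedAnnihilator]

theorem rank_fromCols_kronecker_add (G : Matrix m n K) :
    (fromCols (G ⊗ₖ (1 : Matrix n n K)) ((1 : Matrix m m K) ⊗ₖ Gᵀ)).rank +
      (Fintype.card n - G.rank) * (Fintype.card m - G.rank) =
        Fintype.card m * Fintype.card n := by
  have key := rank_add_finrank_ker
    (fromCols (G ⊗ₖ (1 : Matrix n n K)) ((1 : Matrix m m K) ⊗ₖ Gᵀ))ᵀ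
  rw [rank_transpose, ker_transpose_fromCols_kronecker, LinearEquiv.finrank_map_eq,
    finrank_twoSidedAnnihilator, Fintype.card_prod] at key
  have hG := rank_add_finrank_ker G
  have hGt := rank_add_finrank_ker Gᵀ
  rw [rank_transpose] at hGt
  rwa [Nat.eq_sub_of_add_eq' hG, Nat.eq_sub_of_add_eq' hGt] at key

end

theorem fromCols_kronecker_mul_transpose_eq_zero [CommRing R] [CharP R 2]
    [Fintype m] [Fintype n] [Fintype p] [Fintype q]
    [DecidableEq m] [DecidableEq n] [DecidableEq p] [DecidableEq q]
    (A : Matrix m n R) (B : Matrix p q R) :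
    fromCols ((1 : Matrix n n R) ⊗ₖ B) (Aᵀ ⊗ₖ (1 : Matrix p p R)) *
      (fromCols (A ⊗ₖ (1 : Matrix q q R)) ((1 : Matrix m m R) ⊗ₖ Bᵀ))ᵀ = 0 := by
  rw [transpose_fromCols, fromCols_mul_fromRows, ← kroneckerMap_transpose,
    ← kroneckerMap_transpose, transpose_one, transpose_one, transpose_transpose,
    ← mul_kronecker_mul, ← mul_kronecker_mul, Matrix.one_mul, Matrix.mul_one, Matrix.mul_one,
    Matrix.one_mul]
  ext
  exact CharTwo.add_self_eq_zero _

end Matrix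

/-- Hypergraph product code `HGP(H, Hᵀ)`: with `H_Z = [H⊗Iₙ , I_m⊗Hᵀ]` and
`H_X = [Iₙ⊗H , Hᵀ⊗I_m]` over `F₂`, (a) the CSS condition `H_X · H_Zᵀ = 0` holds, and
(b) the number of logical qubits is `(n²+m²) − rank H_X − rank H_Z = (n−r)² + (m−r)²`
where `r = rank H`. -/
theorem stmt_9 (m n r : ℕ) (H : Matrix (Fin m) (Fin n) (ZMod 2))
    (hr : H.rank = r)
    (HZ : Matrix (Fin m × Fin n) ((Fin n × Fin n) ⊕ (Fin m × Fin m)) (ZMod 2))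
    (HX : Matrix (Fin n × Fin m) ((Fin n × Fin n) ⊕ (Fin m × Fin m)) (ZMod 2))
    (hHZ : HZ = Matrix.fromCols (H ⊗ₖ (1 : Matrix (Fin n) (Fin n) (ZMod 2)))
      ((1 : Matrix (Fin m) (Fin m) (ZMod 2)) ⊗ₖ Hᵀ))
    (hHX : HX = Matrix.fromCols ((1 : Matrix (Fin n) (Fin n) (ZMod 2)) ⊗ₖ H)
      (Hᵀ ⊗ₖ (1 : Matrix (Fin m) (Fin m) (ZMod 2)))) :
    HX * HZᵀ = 0 ∧
      (n ^ 2 + m ^ 2) - HX.rank - HZ.rank = (n - r) ^ 2 + (m - r) ^ 2 := by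
  refine ⟨hHX ▸ hHZ ▸ fromCols_kronecker_mul_transpose_eq_zero H H, ?_⟩
  have hZ : HZ.rank + (n - r) * (m - r) = m * n := by
    simpa [hHZ, hr] using rank_fromCols_kronecker_add H
  have hX : HX.rank + (n - r) * (m - r) = n * m := by
    have h := rank_fromCols_kronecker_add Hᵀ
    rw [transpose_transpose, rank_transpose, ← rank_fromCols_comm] at h
    simpa [hHX, hr, mul_comm] using h
  obtain ⟨a, rfl⟩ := Nat.exists_eq_add_of_le (hr ▸ H.rank_le_width)
  obtain ⟨b, rfl⟩ := Nat.exists_eq_add_of_le (hr ▸ H.rank_le_height)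
  simp only [Nat.add_sub_cancel_left] at hZ hX ⊢
  have hsum : (r + a) ^ 2 + (r + b) ^ 2 = a ^ 2 + b ^ 2 + HX.rank + HZ.rank := by nlinarith
  omega
end

section
/- Logical X–Z anticommutation criterion for two-block codes: identify an X operator with a pair (p,q) of elements of a commutative F₂-algebra M with monomial basis, acting on qubits L(supp p) ∪ R(supp q), and a Z operator with (p̄, q̄) acting on L(supp p̄) ∪ R(supp q̄). Then the operators anticommute if and only if the coefficient of the identity monomial 1 in p·p̄ᵀ + q·q̄ᵀ is 1. -/
open Finset

theorem Finsupp.sum_mul_apply_eq_card_support_inter {α : Type*} [DecidableEq α]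
    (f g : α →₀ ZMod 2) :
    (f.sum fun a r ↦ r * g a) = #(f.support ∩ g.support) := by
  have one_of_ne_zero : ∀ x : ZMod 2, x ≠ 0 → x = 1 := by decide
  calc (f.sum fun a r ↦ r * g a)
      = ∑ a ∈ f.support, if a ∈ g.support then 1 else 0 := by
        refine Finset.sum_congr rfl fun a ha ↦ ?_
        dsimp only
        rw [one_of_ne_zero _ (Finsupp.mem_support_iff.mp ha), one_mul]
        split_ifs with hg
        · exact one_of_ne_zero _ (Finsupp.mem_support_iff.mp hg)
        · exact Finsupp.notMem_support_iff.mp hg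
    _ = #(f.support ∩ g.support) := by rw [Finset.sum_boole, Finset.filter_mem_eq_inter]

namespace MonoidAlgebra

theorem coeff_one_mul_mapDomain_inv {R G : Type*} [Semiring R] [Group G]
    (x y : MonoidAlgebra R G) :
    (x * mapDomain (fun g ↦ g⁻¹) y).coeff 1 = x.coeff.sum fun a r ↦ r * y.coeff a := by
  rw [coeff_mul_apply_left]
  refine Finsupp.sum_congr fun a _ ↦ ?_
  rw [coeff_mapDomain, mul_one, Finsupp.mapDomain_apply inv_injective]

theorem coeff_one_mul_mapDomain_inv_eq_card_support_inter {G : Type*} [Group G] [DecidableEq G]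
    (x y : MonoidAlgebra (ZMod 2) G) :
    (x * mapDomain (fun g ↦ g⁻¹) y).coeff 1 = #(x.coeff.support ∩ y.coeff.support) := by
  rw [coeff_one_mul_mapDomain_inv, Finsupp.sum_mul_apply_eq_card_support_inter]

end MonoidAlgebra

theorem stmt_13_general (l m : ℕ)
    (p q pb qb : MonoidAlgebra (ZMod 2) (Multiplicative (ZMod l × ZMod m)))
    (T : MonoidAlgebra (ZMod 2) (Multiplicative (ZMod l × ZMod m)) →
      MonoidAlgebra (ZMod 2) (Multiplicative (ZMod l × ZMod m)))
    (hT : ∀ f, T f = MonoidAlgebra.mapDomain (fun g => g⁻¹) f) :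
    Odd ((p.coeff.support ∩ pb.coeff.support).card + (q.coeff.support ∩ qb.coeff.support).card) ↔
      (p * T pb + q * T qb).coeff 1 = 1 := by
  rw [MonoidAlgebra.coeff_add, Finsupp.add_apply, hT, hT,
    MonoidAlgebra.coeff_one_mul_mapDomain_inv_eq_card_support_inter,
    MonoidAlgebra.coeff_one_mul_mapDomain_inv_eq_card_support_inter,
    ← Nat.cast_add, ZMod.natCast_eq_one_iff_odd]

/-- Anticommutation criterion for two-block codes: the X operator `(p, q)` and the
Z operator `(p̄, q̄)` (supported on `L(supp p) ∪ R(supp q)` and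
`L(supp p̄) ∪ R(supp q̄)`) anticommute — i.e. their supports intersect in an odd
number of qubits — if and only if the coefficient of the identity monomial in
`p·p̄ᵀ + q·q̄ᵀ` equals 1. -/
theorem stmt_13 (l m : ℕ) [NeZero l] [NeZero m]
    (p q pb qb : MonoidAlgebra (ZMod 2) (Multiplicative (ZMod l × ZMod m)))
    (T : MonoidAlgebra (ZMod 2) (Multiplicative (ZMod l × ZMod m)) →
      MonoidAlgebra (ZMod 2) (Multiplicative (ZMod l × ZMod m)))
    (hT : ∀ f, T f = MonoidAlgebra.mapDomain (fun g => g⁻¹) f) :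
    Odd ((p.coeff.support ∩ pb.coeff.support).card + (q.coeff.support ∩ qb.coeff.support).card) ↔
      (p * T pb + q * T qb).coeff 1 = 1 :=
  stmt_13_general l m p q pb qb T hT
end
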